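/- For every real ξ > 0, every positive integer h, every real β, and every complex number ρ with |ρ| = 1: ∑_{r=0}^{2^h−1} exp(ξ·Re(ρ·T_h((β+r)/2^h))) ≤ ∑_{r=0}^{2^h−1} exp(ξ·Re(T_h(r/2^h))). -/

import Mathlib

/-- `e x = exp(2πix)`. -/
noncomputable def e (x : ℝ) : ℂ := Complex.exp (2 * Real.pi * Complex.I * x)

/-- `T_h(α) = ∑_{0 ≤ n ≤ h-1} e(α·2^n)`. -/
noncomputable def Th (h : ℕ) (α : ℝ) : ℂ := ∑ n ∈ Finset.range h, e (α * 2 ^ n)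

/-!
Write `Re (ρ T_h(α)) = ∑_{n<h} (ρ/2) e(2^n α) + (ρ̄/2) e(-2^n α)`. The `j`-th power sum over the
points `(β + r)/2^h` then expands into products of coefficients times `e(Kβ/2^h) ∑_r e(rK/2^h)`, and
the inner sum is `2^h` or `0` according as `2^h ∣ K` or not. Hence every moment is dominated termwise
by the one for `ρ = 1`, `β = 0`, where all terms are nonnegative; since `ξ > 0`, expanding `exp` into
its power series gives the inequality.
-/

open Finset Complex ComplexConjugate

lemma e_add (x y : ℝ) : e (x + y) = e x * e y := by
  simp only [e, ← Complex.exp_add]; push_cast; ring_nf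

lemma e_neg (x : ℝ) : e (-x) = conj (e x) := by
  simp only [e, ← Complex.exp_conj, map_mul, conj_I, conj_ofReal, map_ofNat]
  push_cast; ring_nf

lemma e_zero : e 0 = 1 := by simp [e]

lemma norm_e (x : ℝ) : ‖e x‖ = 1 := by
  simp [e, Complex.norm_exp]

lemma e_sum {ι : Type*} (s : Finset ι) (f : ι → ℝ) : e (∑ i ∈ s, f i) = ∏ i ∈ s, e (f i) := by
  simp only [e, ← Complex.exp_sum, ofReal_sum, Finset.mul_sum]

lemma e_nat_mul (n : ℕ) (x : ℝ) : e (n * x) = e x ^ n := by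
  rw [e, e, ← Complex.exp_nat_mul]; push_cast; ring_nf

lemma e_eq_one_iff (x : ℝ) : e x = 1 ↔ ∃ n : ℤ, x = n := by
  rw [e, Complex.exp_eq_one_iff]
  have h2πI : 2 * (Real.pi : ℂ) * I ≠ 0 := by simp [Real.pi_ne_zero]
  refine exists_congr fun n => ?_
  rw [mul_comm (n : ℂ), mul_right_inj' h2πI]
  exact_mod_cast Iff.rfl

lemma sum_range_e_mul_div (N : ℕ) (K : ℤ) :
    ∑ r ∈ range N, e (r * K / N) = if (N : ℤ) ∣ K then (N : ℂ) else 0 := by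
  rcases N.eq_zero_or_pos with rfl | hN
  · simp
  have hN' : (N : ℝ) ≠ 0 := by positivity
  simp only [mul_div_assoc, e_nat_mul]
  split_ifs with hK
  · obtain ⟨m, rfl⟩ := hK
    have hζ : e (N * m / N) = 1 := by
      rw [mul_div_cancel_left₀ _ hN', e_eq_one_iff]; exact ⟨m, rfl⟩
    push_cast
    simp [hζ]
  · have hζ : e (K / N) ≠ 1 := by
      rintro h
      obtain ⟨n, hn⟩ := (e_eq_one_iff _).1 h
      rw [div_eq_iff hN'] at hn
      exact hK ⟨n, by exact_mod_cast hn.trans (mul_comm _ _)⟩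
    have hζN : e (K / N) ^ N = 1 := by
      rw [← e_nat_mul, mul_div_cancel₀ _ hN', e_eq_one_iff]; exact ⟨K, rfl⟩
    rw [geom_sum_eq hζ, hζN, sub_self, zero_div]

section TrigPoly

variable {ι : Type*} (s : Finset ι) (c : ι → ℂ) (k : ι → ℤ)

noncomputable def trigPoly (α : ℝ) : ℂ := ∑ i ∈ s, c i * e (k i * α)

lemma trigPoly_pow (α : ℝ) (j : ℕ) :
    trigPoly s c k α ^ j =
      ∑ p ∈ Fintype.piFinset fun _ : Fin j => s, (∏ i, c (p i)) * e ((∑ i, k (p i) : ℤ) * α) := by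
  rw [trigPoly, sum_pow']
  refine sum_congr rfl fun p _ => ?_
  push_cast
  rw [prod_mul_distrib, sum_mul, e_sum]

lemma sum_trigPoly_pow (N : ℕ) (β : ℝ) (j : ℕ) :
    ∑ r ∈ range N, trigPoly s c k ((β + r) / N) ^ j =
      ∑ p ∈ Fintype.piFinset fun _ : Fin j => s,
        (∏ i, c (p i)) * e ((∑ i, k (p i) : ℤ) * β / N) *
          if (N : ℤ) ∣ ∑ i, k (p i) then (N : ℂ) else 0 := by
  simp only [trigPoly_pow]
  rw [sum_comm]
  refine sum_congr rfl fun p _ => ?_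
  rw [← sum_range_e_mul_div, mul_sum]
  refine sum_congr rfl fun r _ => ?_
  rw [mul_assoc, ← e_add]
  congr 2
  ring

/- Averaging over `r` keeps only the multi-indices whose total frequency is divisible by `N`,
and there each term is bounded by the corresponding (nonnegative) term for the coefficients `‖c‖`. -/
lemma norm_sum_trigPoly_pow_le (N : ℕ) (β : ℝ) (j : ℕ) :
    ‖∑ r ∈ range N, trigPoly s c k ((β + r) / N) ^ j‖ ≤
      (∑ r ∈ range N, trigPoly s (fun i => (‖c i‖ : ℂ)) k (r / N) ^ j).re := by
  have h := sum_trigPoly_pow s (fun i => (‖c i‖ : ℂ)) k N 0 j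
  simp only [zero_add, mul_zero, zero_div] at h
  rw [sum_trigPoly_pow, h, re_sum]
  refine (norm_sum_le _ _).trans (sum_le_sum fun p _ => ?_)
  split_ifs <;> simp [norm_prod, norm_e, e_zero, ← ofReal_prod]

end TrigPoly

noncomputable def thCoeff (ρ : ℂ) (z : ℕ × Bool) : ℂ := (if z.2 then ρ else conj ρ) / 2

def thFreq (z : ℕ × Bool) : ℤ := (if z.2 then 1 else -1) * 2 ^ z.1

lemma ofReal_re_mul_Th (ρ : ℂ) (h : ℕ) (α : ℝ) :
    ((ρ * Th h α).re : ℂ) = trigPoly (range h ×ˢ univ) (thCoeff ρ) thFreq α := by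
  rw [re_eq_add_conj, trigPoly, sum_product, Th]
  simp only [map_mul, map_sum, mul_sum, ← e_neg, sum_div, ← sum_add_distrib, Fintype.sum_bool]
  refine sum_congr rfl fun n _ => ?_
  simp only [thCoeff, thFreq]
  push_cast
  ring_nf

lemma norm_thCoeff {ρ : ℂ} (hρ : ‖ρ‖ = 1) (z : ℕ × Bool) : (‖thCoeff ρ z‖ : ℂ) = thCoeff 1 z := by
  rcases z with ⟨n, _ | _⟩ <;> simp [thCoeff, hρ]

lemma sum_re_mul_Th_pow_le {ρ : ℂ} (hρ : ‖ρ‖ = 1) (h N : ℕ) (β : ℝ) (j : ℕ) :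
    ∑ r ∈ range N, (ρ * Th h ((β + r) / N)).re ^ j ≤ ∑ r ∈ range N, (Th h (r / N)).re ^ j := by
  have key := norm_sum_trigPoly_pow_le (range h ×ˢ univ) (thCoeff ρ) thFreq N β j
  simp only [norm_thCoeff hρ, ← ofReal_re_mul_Th, one_mul] at key
  calc ∑ r ∈ range N, (ρ * Th h ((β + r) / N)).re ^ j
      = (∑ r ∈ range N, ((ρ * Th h ((β + r) / N)).re : ℂ) ^ j).re := by
        rw [← ofReal_re (∑ r ∈ range N, _)]; push_cast; rfl
    _ ≤ _ := (re_le_norm _).trans key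
    _ = ∑ r ∈ range N, (Th h (r / N)).re ^ j := by
        rw [← ofReal_re (∑ r ∈ range N, _)]; push_cast; rfl

lemma sum_exp_mul_le_of_sum_pow_le {ι : Type*} {s : Finset ι} {ξ : ℝ} (hξ : 0 ≤ ξ)
    {u v : ι → ℝ} (huv : ∀ j : ℕ, ∑ i ∈ s, u i ^ j ≤ ∑ i ∈ s, v i ^ j) :
    ∑ i ∈ s, Real.exp (ξ * u i) ≤ ∑ i ∈ s, Real.exp (ξ * v i) := by
  have hasSum (w : ι → ℝ) : HasSum (fun j : ℕ => ξ ^ j / j.factorial * ∑ i ∈ s, w i ^ j)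
      (∑ i ∈ s, Real.exp (ξ * w i)) := by
    simp only [mul_sum, Real.exp_eq_exp_ℝ]
    refine hasSum_sum fun i _ => ?_
    exact (NormedSpace.expSeries_div_hasSum_exp (ξ * w i)).congr_fun fun j => by ring
  exact hasSum_le (fun j => mul_le_mul_of_nonneg_left (huv j) (by positivity)) (hasSum u) (hasSum v)

theorem exp_sum_sup_at_zero_general (ξ : ℝ) (hξ : 0 < ξ) (h : ℕ) (β : ℝ) (ρ : ℂ)
    (hρ : ‖ρ‖ = 1) :
    ∑ r ∈ Finset.range (2 ^ h), Real.exp (ξ * (ρ * Th h ((β + r) / 2 ^ h)).re) ≤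
      ∑ r ∈ Finset.range (2 ^ h), Real.exp (ξ * (Th h (r / 2 ^ h)).re) := by
  have := sum_exp_mul_le_of_sum_pow_le hξ.le (sum_re_mul_Th_pow_le hρ h (2 ^ h) β)
  simpa using this

/-- The supremum in (43) of the paper occurs at `β = 0`, `ρ = 1`:
`∑_{r<2^h} exp(ξ·Re(ρ T_h((β+r)/2^h))) ≤ ∑_{r<2^h} exp(ξ·Re(T_h(r/2^h)))`. -/
theorem exp_sum_sup_at_zero (ξ : ℝ) (hξ : 0 < ξ) (h : ℕ) (hh : 0 < h) (β : ℝ) (ρ : ℂ)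
    (hρ : ‖ρ‖ = 1) :
    ∑ r ∈ Finset.range (2 ^ h), Real.exp (ξ * (ρ * Th h ((β + r) / 2 ^ h)).re) ≤
      ∑ r ∈ Finset.range (2 ^ h), Real.exp (ξ * (Th h (r / 2 ^ h)).re) :=
  exp_sum_sup_at_zero_general ξ hξ h β ρ hρ
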